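/- arXiv:1401.2787 — 5 statements merged into one kernel-verified Lean document; each statement's English description precedes it below -/
import Mathlib

section
/- For three distinct points A, B, C in Euclidean space with pairwise distances x = |AB|, y = |BC|, z = |AC|, the 3-point Atiyah determinant value xyz(6 + 2(cos α + cos β + cos γ)), where α, β, γ are the angles of triangle ABC, equals 8xyz + (-x+y+z)(x-y+z)(x+y-z), and this quantity is at least 8xyz. In particular it is positive. -/
noncomputable section

open Real

def d3 (x y z : ℝ) : ℝ := (-x + y + z) * (x - y + z) * (x + y - z)

def p4 (a b c x y z : ℝ) : ℝ := a * b * c * x * y * z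

def n4 (a b c x y z : ℝ) : ℝ := p4 a b c x y z - d3 (x*c) (a*y) (b*z)

def z4 (a b c x y z : ℝ) : ℝ :=
  a^2*y^2*(b^2 + c^2 + x^2 + z^2) + b^2*z^2*(a^2 + c^2 + x^2 + y^2)
  + c^2*x^2*(a^2 + b^2 + y^2 + z^2)
  - (a^4*y^2 + a^2*y^4 + b^4*z^2 + b^2*z^4 + c^4*x^2 + c^2*x^4)
  - (a^2*b^2*x^2 + a^2*c^2*z^2 + b^2*c^2*y^2 + x^2*y^2*z^2)

def v4 (a b c x y z : ℝ) : ℝ := (b + z - c - x) * (c + x - a - y) * (a + y - b - z)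

def w4 (a b c x y z : ℝ) : ℝ :=
  (a^2 + y^2)*(b - c - x + z) + (b^2 + z^2)*(-a + c + x - y) + (c^2 + x^2)*(a - b + y - z)
  + 2*(c*x + y*z)*(-a + b) + 2*(a*y + x*z)*(-b + c) + 2*(b*z + x*y)*(a - c)

/-- Symmetric average over the 24 permutations of the distance vector induced by
permuting the four underlying points. -/
def av (f : ℝ → ℝ → ℝ → ℝ → ℝ → ℝ → ℝ) (a b c x y z : ℝ) : ℝ :=
  (1/24) * (f a b c x y z + f a x z b y c + f b c a y z x + f x b y a c z
  + f c a b z x y + f z y c x b a + f y z c x a b + f c b a y x z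
  + f x y b z c a + f a c b z y x + f z x a y b c + f b a c x z y
  + f z c y a b x + f x z a y c b + f x a z b c y + f y x b z a c
  + f y b x c a z + f y c z b a x + f c y z b x a + f z a x c b y
  + f b x y a z c + f c z y a x b + f a z x c y b + f b y x c z a)

def enTerm (a b c x y z : ℝ) : ℝ := a * ((b + c)^2 - y^2) * d3 x y z

def d4 (a b c x y z : ℝ) : ℝ :=
  60 * p4 a b c x y z + 4 * n4 a b c x y z + 2 * z4 a b c x y z
    + 12 * av enTerm a b c x y z

def m4 (a b c x y z : ℝ) : ℝ :=
  d4 a b c x y z - (64 * p4 a b c x y z + 4 * z4 a b c x y z + (v4 a b c x y z)^2)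

def P4 (a b c x y z : ℝ) : ℝ :=
  (8*x*y*z + d3 x y z) * (8*a*b*x + d3 a b x) * (8*a*c*z + d3 a c z) * (8*b*c*y + d3 b c y)

def M4 (a b c x y z : ℝ) : ℝ :=
  (64 * p4 a b c x y z + m4 a b c x y z)^2
  + 32 * p4 a b c x y z * (4 * z4 a b c x y z + (v4 a b c x y z)^2)
  - P4 a b c x y z

/-- The twelve triangular variables. -/
def tv : Fin 12 → ℝ → ℝ → ℝ → ℝ → ℝ → ℝ → ℝ
  | 0 => fun a b _ x _ _ => -a + b + x
  | 1 => fun a b _ x _ _ => a - b + x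
  | 2 => fun a b _ x _ _ => a + b - x
  | 3 => fun _ b c _ y _ => -b + c + y
  | 4 => fun _ b c _ y _ => b - c + y
  | 5 => fun _ b c _ y _ => b + c - y
  | 6 => fun a _ c _ _ z => -a + c + z
  | 7 => fun a _ c _ _ z => a - c + z
  | 8 => fun a _ c _ _ z => a + c - z
  | 9 => fun _ _ _ x y z => -x + y + z
  | 10 => fun _ _ _ x y z => x - y + z
  | 11 => fun _ _ _ x y z => x + y - z

def tmon (α : Fin 12 → ℕ) (a b c x y z : ℝ) : ℝ :=
  ∏ i : Fin 12, (tv i a b c x y z) ^ (α i)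

abbrev E3 := EuclideanSpace ℝ (Fin 3)

open EuclideanGeometry in
theorem stmt3 (A B C : E3) (hAB : A ≠ B) (hBC : B ≠ C) (hAC : A ≠ C)
    (x y z : ℝ) (hx : x = dist A B) (hy : y = dist B C) (hz : z = dist A C) :
    x*y*z * (6 + 2 * (Real.cos (∠ B A C) + Real.cos (∠ A B C) + Real.cos (∠ A C B)))
        = 8*x*y*z + d3 x y z
      ∧ 8*x*y*z ≤ x*y*z * (6 + 2 * (Real.cos (∠ B A C) + Real.cos (∠ A B C)
          + Real.cos (∠ A C B)))
      ∧ 0 < x*y*z * (6 + 2 * (Real.cos (∠ B A C) + Real.cos (∠ A B C)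
          + Real.cos (∠ A C B))) := by
  have hx0 : 0 < x := hx ▸ dist_pos.2 hAB
  have hy0 : 0 < y := hy ▸ dist_pos.2 hBC
  have hz0 : 0 < z := hz ▸ dist_pos.2 hAC
  have lc1 : y^2 = x^2 + z^2 - 2*x*z*Real.cos (∠ B A C) := by
    have h := EuclideanGeometry.law_cos B A C
    rw [dist_comm B A, dist_comm C A] at h
    rw [hx, hy, hz]; linear_combination h
  have lc2 : z^2 = x^2 + y^2 - 2*x*y*Real.cos (∠ A B C) := by
    have h := EuclideanGeometry.law_cos A B C
    rw [dist_comm C B] at h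
    rw [hx, hy, hz]; linear_combination h
  have lc3 : x^2 = y^2 + z^2 - 2*y*z*Real.cos (∠ A C B) := by
    have h := EuclideanGeometry.law_cos A C B
    rw [hx, hy, hz]; linear_combination h
  have heq : x*y*z * (6 + 2 * (Real.cos (∠ B A C) + Real.cos (∠ A B C) + Real.cos (∠ A C B)))
      = 8*x*y*z + d3 x y z := by
    unfold d3
    linear_combination y*lc1 + z*lc2 + x*lc3
  have t1 : 0 ≤ -x + y + z := by
    have := dist_triangle A C B
    rw [← hx, ← hz, dist_comm C B, ← hy] at this; linarith
  have t2 : 0 ≤ x - y + z := by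
    have := dist_triangle B A C
    rw [← hy, dist_comm B A, ← hx, ← hz] at this; linarith
  have t3 : 0 ≤ x + y - z := by
    have := dist_triangle A B C
    rw [← hz, ← hx, ← hy] at this; linarith
  have hd3 : 0 ≤ d3 x y z := mul_nonneg (mul_nonneg t1 t2) t3
  refine ⟨heq, ?_, ?_⟩
  · rw [heq]; linarith
  · rw [heq]; nlinarith [mul_pos (mul_pos hx0 hy0) hz0]
end
end

section
/- For all nonnegative reals a, b, c, x, y, z that arise as the six pairwise distances of four points in ℝ³ (a = |AD|, b = |BD|, c = |CD|, x = |AB|, y = |BC|, z = |AC|), the polynomial n4(u) = abcxyz − d3(xc, ay, bz) is nonnegative, where d3(p,q,r) = (-p+q+r)(p-q+r)(p+q-r). -/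
noncomputable section

open Real

lemma d3_le (p q r : ℝ) (hp : 0 ≤ p) (hq : 0 ≤ q) (hr : 0 ≤ r) :
    d3 p q r ≤ p * q * r := by
  unfold d3
  rcases le_or_gt 0 (-p + q + r) with hu | hu
  · rcases le_or_gt 0 (p - q + r) with hv | hv
    · rcases le_or_gt 0 (p + q - r) with hw | hw
      · nlinarith [mul_nonneg hu hv, mul_nonneg hv hw, mul_nonneg hu hw, sq_nonneg (q-r),
          sq_nonneg (p-r), sq_nonneg (p-q), mul_nonneg (mul_nonneg hp hq) hr,
          mul_nonneg (mul_nonneg hu hv) hw]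
      · nlinarith [mul_nonneg hu hv, mul_nonneg (mul_nonneg hp hq) hr]
    · nlinarith [mul_nonneg hu (by linarith : (0:ℝ) ≤ p + q - r),
        mul_nonneg (mul_nonneg hp hq) hr]
  · nlinarith [mul_nonneg (by linarith : (0:ℝ) ≤ p - q + r)
      (by linarith : (0:ℝ) ≤ p + q - r), mul_nonneg (mul_nonneg hp hq) hr]

lemma n4_nonneg (a b c x y z : ℝ) (ha : 0 ≤ a) (hb : 0 ≤ b) (hc : 0 ≤ c)
    (hx : 0 ≤ x) (hy : 0 ≤ y) (hz : 0 ≤ z) : 0 ≤ n4 a b c x y z := by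
  have h := d3_le (x*c) (a*y) (b*z) (mul_nonneg hx hc) (mul_nonneg ha hy) (mul_nonneg hb hz)
  unfold n4 p4
  nlinarith [h]

theorem stmt4 (A B C D : E3) :
    0 ≤ n4 (dist A D) (dist B D) (dist C D) (dist A B) (dist B C) (dist A C) :=
  n4_nonneg _ _ _ _ _ _ dist_nonneg dist_nonneg dist_nonneg dist_nonneg dist_nonneg dist_nonneg
end
end

section
/- For four points A, B, C, D in ℝ³ with pairwise distances a = |AD|, b = |BD|, c = |CD|, x = |AB|, y = |BC|, z = |AC|, the Cayley–Menger-type polynomial z4(a,b,c,x,y,z) = a²y²(b²+c²+x²+z²) + b²z²(a²+c²+x²+y²) + c²x²(a²+b²+y²+z²) − (a⁴y² + a²y⁴ + b⁴z² + b²z⁴ + c⁴x² + c²x⁴) − (a²b²x² + a²c²z² + b²c²y² + x²y²z²) is nonnegative; indeed it equals 144 V² where V is the volume of the tetrahedron ABCD. -/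
noncomputable section

open Real

lemma z4_key (a b c x y z u1 u2 u3 v1 v2 v3 w1 w2 w3 : ℝ)
    (ha : a^2 = u1^2 + u2^2 + u3^2)
    (hb : b^2 = v1^2 + v2^2 + v3^2)
    (hc : c^2 = w1^2 + w2^2 + w3^2)
    (hx : x^2 = (u1-v1)^2 + (u2-v2)^2 + (u3-v3)^2)
    (hy : y^2 = (v1-w1)^2 + (v2-w2)^2 + (v3-w3)^2)
    (hz : z^2 = (u1-w1)^2 + (u2-w2)^2 + (u3-w3)^2) :
    z4 a b c x y z
      = (2*(u1*(v2*w3 - v3*w2) - u2*(v1*w3 - v3*w1) + u3*(v1*w2 - v2*w1)))^2 := by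
  unfold z4
  rw [show a^4 = (a^2)^2 by ring, show b^4 = (b^2)^2 by ring,
      show c^4 = (c^2)^2 by ring, show x^4 = (x^2)^2 by ring,
      show y^4 = (y^2)^2 by ring, show z^4 = (z^2)^2 by ring,
      ha, hb, hc, hx, hy, hz]
  ring

lemma dist_sq_eq (A B : E3) :
    (dist A B)^2 = (A 0 - B 0)^2 + (A 1 - B 1)^2 + (A 2 - B 2)^2 := by
  rw [EuclideanSpace.dist_eq]
  rw [Real.sq_sqrt (by positivity)]
  simp [Fin.sum_univ_three, Real.dist_eq, sq_abs]

theorem stmt5 (A B C D : E3) :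
    0 ≤ z4 (dist A D) (dist B D) (dist C D) (dist A B) (dist B C) (dist A C) := by
  rw [z4_key (dist A D) (dist B D) (dist C D) (dist A B) (dist B C) (dist A C)
      (A 0 - D 0) (A 1 - D 1) (A 2 - D 2) (B 0 - D 0) (B 1 - D 1) (B 2 - D 2)
      (C 0 - D 0) (C 1 - D 1) (C 2 - D 2)
      (dist_sq_eq A D) (dist_sq_eq B D) (dist_sq_eq C D)
      (by rw [dist_sq_eq A B]; ring) (by rw [dist_sq_eq B C]; ring)
      (by rw [dist_sq_eq A C]; ring)]
  positivity
end
end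

section
/- (Conjecture II for four points, conditional form) Let m4 = d4 − (64p4 + 4z4 + v4²). If u = (a,b,c,x,y,z) ∈ ℝ⁶ is a vector of pairwise distances of four points in ℝ³, and p4(u)·m4(u) ≥ 0 holds whenever u is geometric with p4(u) > 0 (and m4 is continuous), then m4(u) ≥ 0 for all geometric u; consequently d4(u) ≥ 64 p4(u) + 4 z4(u) + v4(u)² ≥ 64 p4(u). -/
noncomputable section

open Real

/-! In a nontrivial real normed space each coincidence locus `{q | q i = q j}` is a proper
closed subspace of `Fin 4 → E`, so pairwise distinct quadruples are dense. On them `p4 > 0`,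
so the hypothesis gives `m4 ≥ 0` there, and `m4` of the distance vector is continuous in the
points; hence `m4 ≥ 0` everywhere. Since `m4 = d4 - 64 p4 - 4 z4 - v4²`, the bound on `d4`
follows from `z4 ≥ 0`. -/

open Function Set

theorem continuous_m4_comp {X : Type*} [TopologicalSpace X] {a b c x y z : X → ℝ}
    (ha : Continuous a) (hb : Continuous b) (hc : Continuous c) (hx : Continuous x)
    (hy : Continuous y) (hz : Continuous z) :
    Continuous fun t => m4 (a t) (b t) (c t) (x t) (y t) (z t) := by
  unfold m4 d4 n4 p4 z4 v4 av enTerm d3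
  fun_prop

theorem p4_pos {a b c x y z : ℝ} (ha : 0 < a) (hb : 0 < b) (hc : 0 < c) (hx : 0 < x)
    (hy : 0 < y) (hz : 0 < z) : 0 < p4 a b c x y z := by
  unfold p4
  positivity

theorem le_d4_of_m4_nonneg {a b c x y z : ℝ} (hm : 0 ≤ m4 a b c x y z)
    (hz : 0 ≤ z4 a b c x y z) : 64 * p4 a b c x y z ≤ d4 a b c x y z := by
  have hv := sq_nonneg (v4 a b c x y z)
  unfold m4 at hm
  linarith

section DistinctPoints

variable {ι E : Type*} [NormedAddCommGroup E] [NormedSpace ℝ E] [Nontrivial E]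

theorem dense_setOf_apply_ne {i j : ι} (hij : i ≠ j) : Dense {f : ι → E | f i ≠ f j} := by
  classical
  let S : Submodule ℝ (ι → E) :=
    LinearMap.ker (LinearMap.proj (R := ℝ) (φ := fun _ => E) i - LinearMap.proj j)
  have hS : {f : ι → E | f i ≠ f j} = (S : Set (ι → E))ᶜ := by
    ext f
    simp [S, sub_eq_zero]
  rw [hS, ← interior_eq_empty_iff_dense_compl, ← not_nonempty_iff_eq_empty]
  intro hint
  obtain ⟨v, hv⟩ := exists_ne (0 : E)
  have hmem : Pi.single i v ∈ S := by
    rw [S.eq_top_of_nonempty_interior' hint]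
    exact Submodule.mem_top
  simp [S, hij.symm, hv] at hmem

theorem dense_setOf_injective [Finite ι] : Dense {f : ι → E | Injective f} := by
  have h : {f : ι → E | Injective f}
      = ⋂₀ range fun p : {p : ι × ι // p.1 ≠ p.2} => {f : ι → E | f p.1.1 ≠ f p.1.2} := by
    ext f
    simp [injective_iff_pairwise_ne, Pairwise]
  rw [h]
  refine (finite_range _).dense_sInter ?_ ?_ <;> rintro _ ⟨⟨⟨i, j⟩, hij⟩, rfl⟩
  · exact isOpen_ne_fun (continuous_apply i) (continuous_apply j)
  · exact dense_setOf_apply_ne hij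

end DistinctPoints

theorem m4_nonneg_of_mul_nonneg_of_pairwise_ne {E : Type*} [NormedAddCommGroup E]
    [NormedSpace ℝ E] [Nontrivial E]
    (H : ∀ A B C D : E, A ≠ B → A ≠ C → A ≠ D → B ≠ C → B ≠ D → C ≠ D →
      0 ≤ p4 (dist A D) (dist B D) (dist C D) (dist A B) (dist B C) (dist A C)
        * m4 (dist A D) (dist B D) (dist C D) (dist A B) (dist B C) (dist A C))
    (A B C D : E) :
    0 ≤ m4 (dist A D) (dist B D) (dist C D) (dist A B) (dist B C) (dist A C) := by
  let F : (Fin 4 → E) → ℝ := fun q => m4 (dist (q 0) (q 3)) (dist (q 1) (q 3))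
    (dist (q 2) (q 3)) (dist (q 0) (q 1)) (dist (q 1) (q 2)) (dist (q 0) (q 2))
  have hF : Continuous F := by
    apply continuous_m4_comp <;> fun_prop
  suffices ∀ q, 0 ≤ F q from this ![A, B, C, D]
  refine dense_setOf_injective.induction (fun q hq => ?_) (isClosed_le continuous_const hF)
  have hne : ∀ i j : Fin 4, i ≠ j → q i ≠ q j := fun _ _ => hq.ne
  have hd : ∀ i j : Fin 4, i ≠ j → 0 < dist (q i) (q j) := fun i j h => dist_pos.2 (hne i j h)
  refine nonneg_of_mul_nonneg_right (H _ _ _ _ (hne 0 1 (by decide)) (hne 0 2 (by decide))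
    (hne 0 3 (by decide)) (hne 1 2 (by decide)) (hne 1 3 (by decide)) (hne 2 3 (by decide))) ?_
  exact p4_pos (hd 0 3 (by decide)) (hd 1 3 (by decide)) (hd 2 3 (by decide))
    (hd 0 1 (by decide)) (hd 1 2 (by decide)) (hd 0 2 (by decide))

theorem stmt16
    (H : ∀ A B C D : E3, A ≠ B → A ≠ C → A ≠ D → B ≠ C → B ≠ D → C ≠ D →
      0 ≤ p4 (dist A D) (dist B D) (dist C D) (dist A B) (dist B C) (dist A C)
        * m4 (dist A D) (dist B D) (dist C D) (dist A B) (dist B C) (dist A C))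
    (Hz : ∀ A B C D : E3,
      0 ≤ z4 (dist A D) (dist B D) (dist C D) (dist A B) (dist B C) (dist A C)) :
    ∀ A B C D : E3,
      0 ≤ m4 (dist A D) (dist B D) (dist C D) (dist A B) (dist B C) (dist A C)
      ∧ 64 * p4 (dist A D) (dist B D) (dist C D) (dist A B) (dist B C) (dist A C)
          ≤ d4 (dist A D) (dist B D) (dist C D) (dist A B) (dist B C) (dist A C) := by
  intro A B C D
  have hm := m4_nonneg_of_mul_nonneg_of_pairwise_ne H A B C D
  exact ⟨hm, le_d4_of_m4_nonneg hm (Hz A B C D)⟩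
end
end

section
/- (Conjecture III for four points, conditional form) Suppose u = (a,b,c,x,y,z) is a geometric vector (pairwise distances of four points in ℝ³) and suppose z4(u) ≥ 0, d4(u) + 32p4(u) + m4(u) ≥ 0, and M4(u) ≥ 0. Then d4(u)² ≥ P4(u); i.e., the square of the real part of the 4-point Atiyah determinant dominates the product of the four 3-point Atiyah determinants of the faces. -/
noncomputable section

open Real

theorem stmt19 (a b c x y z : ℝ)
    (hgeo : ∃ A B C D : E3, dist A D = a ∧ dist B D = b ∧ dist C D = c ∧
      dist A B = x ∧ dist B C = y ∧ dist A C = z)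
    (hz : 0 ≤ z4 a b c x y z)
    (hd : 0 ≤ d4 a b c x y z + 32 * p4 a b c x y z + m4 a b c x y z)
    (hM : 0 ≤ M4 a b c x y z) :
    P4 a b c x y z ≤ (d4 a b c x y z)^2 := by
  have key : (d4 a b c x y z)^2 =
      P4 a b c x y z
      + (4 * z4 a b c x y z + (v4 a b c x y z)^2)
        * (d4 a b c x y z + 32 * p4 a b c x y z + m4 a b c x y z)
      + M4 a b c x y z := by
    simp only [M4, m4]; ring
  nlinarith [sq_nonneg (v4 a b c x y z), hz, hd, hM]
end
end
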